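/- arXiv:2112.14839 — 3 statements merged into one kernel-verified Lean document; each statement's English description precedes it below -/
import Mathlib

section
/- (Principle of nil causality, Theorem 2.) Let d ≥ 3, let ρ be a probability density on ℝ^d with first-coordinate marginal ρ₁ > 0 almost everywhere, and let F₁, g₁₁ : ℝ^d → ℝ be functions that do not depend on the variable x₂, so they may be regarded as functions of (x₁, x₃, …, x_d). Assume: (i) for almost every (x₃,…,x_d), the map x₁ ↦ F₁·ρ_{∖2} is continuously differentiable and tends to 0 as x₁ → ±∞, and the map x₁ ↦ g₁₁·ρ_{∖2} is twice continuously differentiable with first x₁-derivative tending to 0 as x₁ → ±∞; (ii) ∂(F₁ρ_{∖2})/∂x₁ and ∂²(g₁₁ρ_{∖2})/∂x₁² are integrable on ℝ^{d-1}, and ρ_{2|1}(x₂|x₁)·∂(F₁ρ_{∖2})/∂x₁ and ρ_{2|1}(x₂|x₁)·∂²(g₁₁ρ_{∖2})/∂x₁² are integrable on ℝ^d. Then T_{2→1} = −∫_{ℝ^d} ρ_{2|1}(x₂|x₁) ∂(F₁ρ_{∖2})/∂x₁ dx + (1/2)∫_{ℝ^d} ρ_{2|1}(x₂|x₁) ∂²(g₁₁ρ_{∖2})/∂x₁²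 dx = 0. -/
open MeasureTheory Filter

noncomputable section

/-- Marginal density of the first coordinate. -/
def rho1 {m : ℕ} (ρ : ℝ × ℝ × (Fin m → ℝ) → ℝ) (x₁ : ℝ) : ℝ :=
  ∫ p : ℝ × (Fin m → ℝ), ρ (x₁, p)

/-- Joint marginal density of the first two coordinates. -/
def rho12 {m : ℕ} (ρ : ℝ × ℝ × (Fin m → ℝ) → ℝ) (x₁ x₂ : ℝ) : ℝ :=
  ∫ y : Fin m → ℝ, ρ (x₁, x₂, y)

/-- Conditional density of the second coordinate given the first. -/
def rho2c {m : ℕ} (ρ : ℝ × ℝ × (Fin m → ℝ) → ℝ) (x₁ x₂ : ℝ) : ℝ :=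
  rho12 ρ x₁ x₂ / rho1 ρ x₁

/-- Marginal density with x₂ integrated out: ρ_{∖2}(x₁,x₃,…,x_d) = ∫ ρ dx₂. -/
def rhoM2 {m : ℕ} (ρ : ℝ × ℝ × (Fin m → ℝ) → ℝ) (x₁ : ℝ) (y : Fin m → ℝ) : ℝ :=
  ∫ x₂ : ℝ, ρ (x₁, x₂, y)

/-
Because F₁ and g₁₁ do not depend on x₂, both integrands of T_{2→1} are ρ_{2|1}(x₂|x₁) times a
function of (x₁, x₃, …, x_d). Integrating out x₂ first, ∫ ρ_{2|1}(x₂|x₁) dx₂ = 1, so each term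
reduces to the integral over ℝ^{d-1} of an x₁-derivative. By Fubini and the fundamental theorem
of calculus on the whole line, the decay at x₁ → ±∞ makes each of these vanish.
-/

lemma integral_deriv_eq_zero_of_tendsto {E : Type*} [NormedAddCommGroup E] [NormedSpace ℝ E]
    [CompleteSpace E] {f : ℝ → E} (hf : Differentiable ℝ f) (hint : Integrable (deriv f))
    (hbot : Tendsto f atBot (nhds 0)) (htop : Tendsto f atTop (nhds 0)) :
    ∫ x, deriv f x = 0 := by
  simpa using integral_of_hasDerivAt_of_tendsto (fun x => (hf x).hasDerivAt) hint hbot htop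

lemma integral_prod_eq_zero_of_ae_integral_eq_zero {α β E : Type*} [MeasureSpace α]
    [MeasureSpace β] [SFinite (volume : Measure α)] [SFinite (volume : Measure β)]
    [NormedAddCommGroup E] [NormedSpace ℝ E] {φ : α × β → E} (hφ : Integrable φ)
    (h0 : ∀ᵐ y, ∫ x, φ (x, y) = 0) : ∫ p, φ p = 0 := by
  rw [Measure.volume_eq_prod, integral_prod_symm φ hφ, integral_congr_ae h0, integral_zero]

lemma integral_deriv_fst_eq_zero {β E : Type*} [MeasureSpace β] [SFinite (volume : Measure β)]
    [NormedAddCommGroup E] [NormedSpace ℝ E] [CompleteSpace E] {G : ℝ → β → E}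
    (hG : ∀ᵐ y, Differentiable ℝ (fun t => G t y))
    (hbot : ∀ᵐ y, Tendsto (fun t => G t y) atBot (nhds 0))
    (htop : ∀ᵐ y, Tendsto (fun t => G t y) atTop (nhds 0))
    (hint : Integrable (fun p : ℝ × β => deriv (fun t => G t p.2) p.1)) :
    ∫ p : ℝ × β, deriv (fun t => G t p.2) p.1 = 0 := by
  refine integral_prod_eq_zero_of_ae_integral_eq_zero hint ?_
  filter_upwards [hG, hbot, htop, hint.prod_left_ae] with y hGy hboty htopy hinty
  exact integral_deriv_eq_zero_of_tendsto hGy hinty hboty htopy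

lemma integral_rho12_eq_rho1 {m : ℕ} {ρ : ℝ × ℝ × (Fin m → ℝ) → ℝ} {x₁ : ℝ}
    (hρ : Integrable (fun p : ℝ × (Fin m → ℝ) => ρ (x₁, p))) :
    ∫ x₂, rho12 ρ x₁ x₂ = rho1 ρ x₁ :=
  (integral_prod _ hρ).symm

lemma ae_integral_rho2c_eq_one {m : ℕ} {ρ : ℝ × ℝ × (Fin m → ℝ) → ℝ} (hρ : Integrable ρ)
    (hρ1_pos : ∀ᵐ x₁, 0 < rho1 ρ x₁) :
    ∀ᵐ x₁, ∫ x₂, rho2c ρ x₁ x₂ = 1 := by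
  filter_upwards [hρ1_pos, hρ.prod_right_ae] with x₁ hpos hslice
  simp only [rho2c]
  rw [integral_div, integral_rho12_eq_rho1 hslice, div_self hpos.ne']

lemma integral_rho2c_mul_eq {m : ℕ} {ρ : ℝ × ℝ × (Fin m → ℝ) → ℝ} (hρ : Integrable ρ)
    (hρ1_pos : ∀ᵐ x₁, 0 < rho1 ρ x₁) {φ : ℝ × (Fin m → ℝ) → ℝ} (hφ : Integrable φ)
    (hint : Integrable (fun x : ℝ × ℝ × (Fin m → ℝ) => rho2c ρ x.1 x.2.1 * φ (x.1, x.2.2))) :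
    ∫ x : ℝ × ℝ × (Fin m → ℝ), rho2c ρ x.1 x.2.1 * φ (x.1, x.2.2) = ∫ p, φ p := by
  have hslice : ∀ᵐ x₁, ∫ p : ℝ × (Fin m → ℝ), rho2c ρ x₁ p.1 * φ (x₁, p.2)
      = ∫ y, φ (x₁, y) := by
    filter_upwards [ae_integral_rho2c_eq_one hρ hρ1_pos] with x₁ hone
    rw [Measure.volume_eq_prod, integral_prod_mul (fun x₂ => rho2c ρ x₁ x₂) (fun y => φ (x₁, y)),
      hone, one_mul]
  rw [Measure.volume_eq_prod, integral_prod _ hint, integral_congr_ae hslice]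
  exact integral_integral (f := fun x₁ y => φ (x₁, y)) hφ

lemma integral_rho2c_mul_deriv_fst_eq_zero {m : ℕ} {ρ : ℝ × ℝ × (Fin m → ℝ) → ℝ}
    (hρ : Integrable ρ) (hρ1_pos : ∀ᵐ x₁, 0 < rho1 ρ x₁) {G : ℝ → (Fin m → ℝ) → ℝ}
    (hG : ∀ᵐ y, Differentiable ℝ (fun t => G t y))
    (hbot : ∀ᵐ y, Tendsto (fun t => G t y) atBot (nhds 0))
    (htop : ∀ᵐ y, Tendsto (fun t => G t y) atTop (nhds 0))
    (hint : Integrable (fun p : ℝ × (Fin m → ℝ) => deriv (fun t => G t p.2) p.1))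
    (hint' : Integrable (fun x : ℝ × ℝ × (Fin m → ℝ) =>
      rho2c ρ x.1 x.2.1 * deriv (fun t => G t x.2.2) x.1)) :
    ∫ x : ℝ × ℝ × (Fin m → ℝ), rho2c ρ x.1 x.2.1 * deriv (fun t => G t x.2.2) x.1 = 0 := by
  rw [integral_rho2c_mul_eq hρ hρ1_pos hint hint']
  exact integral_deriv_fst_eq_zero hG hbot htop hint

theorem nil_causality_general
    (m : ℕ)
    (ρ : ℝ × ℝ × (Fin m → ℝ) → ℝ)
    (hρ_int : Integrable ρ)
    (hρ1_pos : ∀ᵐ x₁ : ℝ, 0 < rho1 ρ x₁)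
    -- F₁ and g₁₁ do not depend on x₂: they are functions of (x₁, x₃, …, x_d)
    (F₁ g₁₁ : ℝ → (Fin m → ℝ) → ℝ)
    -- (i) smoothness and decay, for almost every (x₃,…,x_d):
    (hF_smooth : ∀ᵐ y : Fin m → ℝ, ContDiff ℝ 1 (fun t => F₁ t y * rhoM2 ρ t y))
    (hF_decay_top : ∀ᵐ y : Fin m → ℝ,
      Tendsto (fun t => F₁ t y * rhoM2 ρ t y) atTop (nhds 0))
    (hF_decay_bot : ∀ᵐ y : Fin m → ℝ,
      Tendsto (fun t => F₁ t y * rhoM2 ρ t y) atBot (nhds 0))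
    (hg_smooth : ∀ᵐ y : Fin m → ℝ, ContDiff ℝ 2 (fun t => g₁₁ t y * rhoM2 ρ t y))
    (hg_decay_top : ∀ᵐ y : Fin m → ℝ,
      Tendsto (deriv (fun t => g₁₁ t y * rhoM2 ρ t y)) atTop (nhds 0))
    (hg_decay_bot : ∀ᵐ y : Fin m → ℝ,
      Tendsto (deriv (fun t => g₁₁ t y * rhoM2 ρ t y)) atBot (nhds 0))
    -- (ii) integrability on ℝ^{d-1}:
    (hF_int : Integrable (fun p : ℝ × (Fin m → ℝ) =>
      deriv (fun t => F₁ t p.2 * rhoM2 ρ t p.2) p.1))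
    (hg_int : Integrable (fun p : ℝ × (Fin m → ℝ) =>
      deriv (deriv (fun t => g₁₁ t p.2 * rhoM2 ρ t p.2)) p.1))
    -- (ii) integrability on ℝ^d:
    (hF_int' : Integrable (fun x : ℝ × ℝ × (Fin m → ℝ) =>
      rho2c ρ x.1 x.2.1 * deriv (fun t => F₁ t x.2.2 * rhoM2 ρ t x.2.2) x.1))
    (hg_int' : Integrable (fun x : ℝ × ℝ × (Fin m → ℝ) =>
      rho2c ρ x.1 x.2.1 * deriv (deriv (fun t => g₁₁ t x.2.2 * rhoM2 ρ t x.2.2)) x.1)) :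
    -(∫ x : ℝ × ℝ × (Fin m → ℝ),
        rho2c ρ x.1 x.2.1 * deriv (fun t => F₁ t x.2.2 * rhoM2 ρ t x.2.2) x.1)
      + (1/2) * ∫ x : ℝ × ℝ × (Fin m → ℝ),
        rho2c ρ x.1 x.2.1 * deriv (deriv (fun t => g₁₁ t x.2.2 * rhoM2 ρ t x.2.2)) x.1
      = 0 := by
  have hF := integral_rho2c_mul_deriv_fst_eq_zero hρ_int hρ1_pos
    (hF_smooth.mono fun _ h => h.differentiable one_ne_zero) hF_decay_bot hF_decay_top
    hF_int hF_int'
  have hg := integral_rho2c_mul_deriv_fst_eq_zero hρ_int hρ1_pos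
    (G := fun t y => deriv (fun s => g₁₁ s y * rhoM2 ρ s y) t)
    (hg_smooth.mono fun _ h => h.differentiable_deriv_two) hg_decay_bot hg_decay_top
    hg_int hg_int'
  rw [hF, hg]
  ring

/-- Principle of nil causality.  If F₁ and g₁₁ do not depend on x₂
(hence are given as functions of (x₁, x₃,…,x_d)), then under the stated smoothness,
decay and integrability assumptions, the information flow T_{2→1} vanishes. -/
theorem nil_causality
    (m : ℕ) (hm : 1 ≤ m)
    (ρ : ℝ × ℝ × (Fin m → ℝ) → ℝ)
    (hρ_meas : Measurable ρ)
    (hρ_nonneg : ∀ x, 0 ≤ ρ x)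
    (hρ_int : Integrable ρ)
    (hρ_prob : ∫ x : ℝ × ℝ × (Fin m → ℝ), ρ x = 1)
    (hρ1_pos : ∀ᵐ x₁ : ℝ, 0 < rho1 ρ x₁)
    -- F₁ and g₁₁ do not depend on x₂: they are functions of (x₁, x₃, …, x_d)
    (F₁ g₁₁ : ℝ → (Fin m → ℝ) → ℝ)
    -- (i) smoothness and decay, for almost every (x₃,…,x_d):
    (hF_smooth : ∀ᵐ y : Fin m → ℝ, ContDiff ℝ 1 (fun t => F₁ t y * rhoM2 ρ t y))
    (hF_decay_top : ∀ᵐ y : Fin m → ℝ,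
      Tendsto (fun t => F₁ t y * rhoM2 ρ t y) atTop (nhds 0))
    (hF_decay_bot : ∀ᵐ y : Fin m → ℝ,
      Tendsto (fun t => F₁ t y * rhoM2 ρ t y) atBot (nhds 0))
    (hg_smooth : ∀ᵐ y : Fin m → ℝ, ContDiff ℝ 2 (fun t => g₁₁ t y * rhoM2 ρ t y))
    (hg_decay_top : ∀ᵐ y : Fin m → ℝ,
      Tendsto (deriv (fun t => g₁₁ t y * rhoM2 ρ t y)) atTop (nhds 0))
    (hg_decay_bot : ∀ᵐ y : Fin m → ℝ,
      Tendsto (deriv (fun t => g₁₁ t y * rhoM2 ρ t y)) atBot (nhds 0))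
    -- (ii) integrability on ℝ^{d-1}:
    (hF_int : Integrable (fun p : ℝ × (Fin m → ℝ) =>
      deriv (fun t => F₁ t p.2 * rhoM2 ρ t p.2) p.1))
    (hg_int : Integrable (fun p : ℝ × (Fin m → ℝ) =>
      deriv (deriv (fun t => g₁₁ t p.2 * rhoM2 ρ t p.2)) p.1))
    -- (ii) integrability on ℝ^d:
    (hF_int' : Integrable (fun x : ℝ × ℝ × (Fin m → ℝ) =>
      rho2c ρ x.1 x.2.1 * deriv (fun t => F₁ t x.2.2 * rhoM2 ρ t x.2.2) x.1))
    (hg_int' : Integrable (fun x : ℝ × ℝ × (Fin m → ℝ) =>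
      rho2c ρ x.1 x.2.1 * deriv (deriv (fun t => g₁₁ t x.2.2 * rhoM2 ρ t x.2.2)) x.1)) :
    -(∫ x : ℝ × ℝ × (Fin m → ℝ),
        rho2c ρ x.1 x.2.1 * deriv (fun t => F₁ t x.2.2 * rhoM2 ρ t x.2.2) x.1)
      + (1/2) * ∫ x : ℝ × ℝ × (Fin m → ℝ),
        rho2c ρ x.1 x.2.1 * deriv (deriv (fun t => g₁₁ t x.2.2 * rhoM2 ρ t x.2.2)) x.1
      = 0 :=
  nil_causality_general m ρ hρ_int hρ1_pos F₁ g₁₁ hF_smooth hF_decay_top hF_decay_bot hg_smooth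
    hg_decay_top hg_decay_bot hF_int hg_int hF_int' hg_int'
end
end

section
/- (Invariance of information flow, Theorem 3.) Let d ≥ 3, let ρ be a probability density on ℝ^d with ρ₁ > 0 almost everywhere, and let F₁, g₁₁ : ℝ^d → ℝ be such that all integrals below exist and are finite. Let φ : ℝ^{d-2} → ℝ^{d-2} be a C¹ diffeomorphism of the coordinates (x₃,…,x_d), set Φ(x₁,x₂,y) = (x₁,x₂,φ(y)), and define the transformed objects ρ̃ = (ρ∘Φ⁻¹)·|det Dφ⁻¹|, F̃₁ = F₁∘Φ⁻¹, g̃₁₁ = g₁₁∘Φ⁻¹. Then the information flow is invariant: −∫_{ℝ^d} ρ̃_{2|1} ∂(F̃₁ρ̃_{∖2})/∂x₁ dx̃ + (1/2)∫_{ℝ^d} ρ̃_{2|1} ∂²(g̃₁₁ρ̃_{∖2})/∂x₁² dx̃ = −∫_{ℝ^d} ρ_{2|1} ∂(F₁ρ_{∖2})/∂x₁ dx + (1/2)∫_{ℝ^d} ρ_{2|1} ∂²(g₁₁ρ_{∖2})/∂x₁² dx, i.e., T̃_{2→1} = T_{2→1}. (Assume in addition that ρ_{∖2} is C² in x₁,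 that differentiation in x₁ may be interchanged with the integration defining ρ̃_{∖2} from ρ_{∖2}, and the integrability needed to apply the change of variables y = φ⁻¹(ỹ).) -/
/-!
The transformation acts only on `y = (x₃, …, x_d)`, and the Jacobian factor `|det Dφ⁻¹(ỹ)|`
does not depend on `x₁`. So the change of variables `y = φ⁻¹(ỹ)` leaves `ρ₁₂`, hence `ρ₁` and
`ρ_{2|1}`, unchanged, while `ρ̃_{∖2}` is `ρ_{∖2}` composed with `φ⁻¹` times the Jacobian factor.
That factor comes out of the `x₁`-derivatives, and a second change of variables in the outer
integral over `ℝ^d` absorbs it.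
-/

open MeasureTheory Filter

noncomputable section

/-- The information flow from X₂ to X₁:
T_{2→1} = −∫ ρ_{2|1} ∂(F₁ρ_{∖2})/∂x₁ dx + (1/2)∫ ρ_{2|1} ∂²(g₁₁ρ_{∖2})/∂x₁² dx. -/
def infoFlow {m : ℕ} (ρ F₁ g₁₁ : ℝ × ℝ × (Fin m → ℝ) → ℝ) : ℝ :=
  -(∫ x : ℝ × ℝ × (Fin m → ℝ),
      rho2c ρ x.1 x.2.1 * deriv (fun t => F₁ (t, x.2.1, x.2.2) * rhoM2 ρ t x.2.2) x.1)
  + (1/2) * ∫ x : ℝ × ℝ × (Fin m → ℝ),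
      rho2c ρ x.1 x.2.1
        * deriv (deriv (fun t => g₁₁ (t, x.2.1, x.2.2) * rhoM2 ρ t x.2.2)) x.1

theorem ContinuousLinearMap.det_id_prodMap {F E : Type*} [NormedAddCommGroup F]
    [NormedSpace ℝ F] [FiniteDimensional ℝ F] [NormedAddCommGroup E] [NormedSpace ℝ E]
    [FiniteDimensional ℝ E] (A : E →L[ℝ] E) :
    ((ContinuousLinearMap.id ℝ F).prodMap A).det = A.det := by
  simp only [ContinuousLinearMap.det, ContinuousLinearMap.coe_prodMap,
    ContinuousLinearMap.coe_id, LinearMap.det_prodMap, LinearMap.det_id, one_mul]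

section ChangeOfVariables

variable {E F G : Type*} [NormedAddCommGroup E] [NormedSpace ℝ E] [FiniteDimensional ℝ E]
  [MeasurableSpace E] [BorelSpace E] [NormedAddCommGroup F] [NormedSpace ℝ F]
  [FiniteDimensional ℝ F] [MeasurableSpace F] [BorelSpace F]
  [NormedAddCommGroup G] [NormedSpace ℝ G]
  {ψ : E → E} {ψ' : E → E →L[ℝ] E}

theorem integral_abs_det_fderiv_smul_comp (μ : Measure E) [μ.IsAddHaarMeasure]
    (hψ : ∀ y, HasFDerivAt ψ (ψ' y) y) (hψ_bij : ψ.Bijective) (g : E → G) :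
    ∫ y, |(ψ' y).det| • g (ψ y) ∂μ = ∫ y, g y ∂μ := by
  have h := integral_image_eq_integral_abs_det_fderiv_smul μ MeasurableSet.univ
    (fun y _ => (hψ y).hasFDerivWithinAt) hψ_bij.injective.injOn g
  rw [Set.image_univ, hψ_bij.surjective.range_eq, Measure.restrict_univ] at h
  exact h.symm

theorem integral_abs_det_fderiv_smul_comp_snd (μ : Measure (F × E)) [μ.IsAddHaarMeasure]
    (hψ : ∀ y, HasFDerivAt ψ (ψ' y) y) (hψ_bij : ψ.Bijective) (g : F × E → G) :
    ∫ p, |(ψ' p.2).det| • g (p.1, ψ p.2) ∂μ = ∫ p, g p ∂μ := by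
  have h := integral_abs_det_fderiv_smul_comp μ
    (fun p => (hasFDerivAt_id p.1).prodMap p (hψ p.2))
    (Function.bijective_id.prodMap hψ_bij) g
  simpa only [ContinuousLinearMap.det_id_prodMap, Prod.map_apply', id_eq] using h

end ChangeOfVariables

-- Instance search does not see through `volume = volume.prod volume` on a product type.
instance (m : ℕ) : (volume : Measure (ℝ × (Fin m → ℝ))).IsAddHaarMeasure :=
  Measure.prod.instIsAddHaarMeasure _ _

instance (m : ℕ) : (volume : Measure (ℝ × ℝ × (Fin m → ℝ))).IsAddHaarMeasure :=
  Measure.prod.instIsAddHaarMeasure _ _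

section Transport

variable {m : ℕ} {ψ : (Fin m → ℝ) → (Fin m → ℝ)}
  {ψ' : (Fin m → ℝ) → (Fin m → ℝ) →L[ℝ] (Fin m → ℝ)} {ρ ρt : ℝ × ℝ × (Fin m → ℝ) → ℝ}
  (hρt : ∀ x, ρt x = ρ (x.1, x.2.1, ψ x.2.2) * |(ψ' x.2.2).det|)
include hρt

theorem rhoM2_eq_comp_mul_abs_det (x₁ : ℝ) (y : Fin m → ℝ) :
    rhoM2 ρt x₁ y = rhoM2 ρ x₁ (ψ y) * |(ψ' y).det| := by
  simp only [rhoM2, hρt]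
  exact integral_mul_const _ _

theorem mul_rhoM2_eq_comp_mul_abs_det {F Ft : ℝ × ℝ × (Fin m → ℝ) → ℝ}
    (hFt : ∀ x, Ft x = F (x.1, x.2.1, ψ x.2.2)) (x₂ : ℝ) (y : Fin m → ℝ) :
    (fun t => Ft (t, x₂, y) * rhoM2 ρt t y)
      = fun t => F (t, x₂, ψ y) * rhoM2 ρ t (ψ y) * |(ψ' y).det| := by
  ext t
  rw [hFt, rhoM2_eq_comp_mul_abs_det hρt, mul_assoc]

variable (hψ : ∀ y, HasFDerivAt ψ (ψ' y) y) (hψ_bij : ψ.Bijective)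
include hψ hψ_bij

theorem rho12_eq_of_comp_mul_abs_det (x₁ x₂ : ℝ) : rho12 ρt x₁ x₂ = rho12 ρ x₁ x₂ := by
  simp only [rho12, hρt]
  rw [← integral_abs_det_fderiv_smul_comp volume hψ hψ_bij fun y => ρ (x₁, x₂, y)]
  simp only [smul_eq_mul, mul_comm]

theorem rho1_eq_of_comp_mul_abs_det (x₁ : ℝ) : rho1 ρt x₁ = rho1 ρ x₁ := by
  simp only [rho1, hρt]
  rw [← integral_abs_det_fderiv_smul_comp_snd volume hψ hψ_bij fun p => ρ (x₁, p)]
  simp only [smul_eq_mul, mul_comm]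

theorem rho2c_eq_of_comp_mul_abs_det (x₁ x₂ : ℝ) : rho2c ρt x₁ x₂ = rho2c ρ x₁ x₂ := by
  rw [rho2c, rho2c, rho12_eq_of_comp_mul_abs_det hρt hψ hψ_bij,
    rho1_eq_of_comp_mul_abs_det hρt hψ hψ_bij]

theorem integral_rho2c_mul_eq_of_comp_mul_abs_det {A At : ℝ × ℝ × (Fin m → ℝ) → ℝ}
    (hA : ∀ x, At x = A (x.1, x.2.1, ψ x.2.2) * |(ψ' x.2.2).det|) :
    ∫ x, rho2c ρt x.1 x.2.1 * At x = ∫ x, rho2c ρ x.1 x.2.1 * A x := by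
  rw [← integral_abs_det_fderiv_smul_comp_snd volume
    (fun q => (hasFDerivAt_id q.1).prodMap q (hψ q.2)) (Function.bijective_id.prodMap hψ_bij)
    fun x => rho2c ρ x.1 x.2.1 * A x]
  simp only [ContinuousLinearMap.det_id_prodMap, hA, rho2c_eq_of_comp_mul_abs_det hρt hψ hψ_bij,
    Prod.map_apply', id_eq, smul_eq_mul]
  congr 1 with x
  ring

end Transport

theorem information_flow_invariant_general
    (m : ℕ)
    (ρ F₁ g₁₁ : ℝ × ℝ × (Fin m → ℝ) → ℝ)
    -- φ is a C¹ diffeomorphism of ℝ^{d-2}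
    (φ : (Fin m → ℝ) ≃ (Fin m → ℝ))
    (hφinv : ContDiff ℝ 1 ⇑φ.symm)
    -- the transformed density, drift and diffusion coefficient
    (ρt Ft gt : ℝ × ℝ × (Fin m → ℝ) → ℝ)
    (hρt : ∀ x : ℝ × ℝ × (Fin m → ℝ),
      ρt x = ρ (x.1, x.2.1, φ.symm x.2.2)
              * |ContinuousLinearMap.det (fderiv ℝ (⇑φ.symm) x.2.2)|)
    (hFt : ∀ x : ℝ × ℝ × (Fin m → ℝ), Ft x = F₁ (x.1, x.2.1, φ.symm x.2.2))
    (hgt : ∀ x : ℝ × ℝ × (Fin m → ℝ), gt x = g₁₁ (x.1, x.2.1, φ.symm x.2.2)) :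
    infoFlow ρt Ft gt = infoFlow ρ F₁ g₁₁ := by
  have hψ (y : Fin m → ℝ) : HasFDerivAt φ.symm (fderiv ℝ φ.symm y) y :=
    (hφinv.differentiable one_ne_zero y).hasFDerivAt
  rw [infoFlow, infoFlow,
    integral_rho2c_mul_eq_of_comp_mul_abs_det hρt hψ φ.symm.bijective
      (A := fun x => deriv (fun t => F₁ (t, x.2.1, x.2.2) * rhoM2 ρ t x.2.2) x.1) fun x => by
      rw [mul_rhoM2_eq_comp_mul_abs_det hρt hFt, deriv_mul_const_field'],
    integral_rho2c_mul_eq_of_comp_mul_abs_det hρt hψ φ.symm.bijective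
      (A := fun x => deriv (deriv (fun t => g₁₁ (t, x.2.1, x.2.2) * rhoM2 ρ t x.2.2)) x.1)
      fun x => by
      rw [mul_rhoM2_eq_comp_mul_abs_det hρt hgt, deriv_mul_const_field', deriv_mul_const_field']]

/-- Invariance of information flow, Theorem 3: T_{2→1} is invariant
under an arbitrary C¹ diffeomorphism of the coordinates (x₃,…,x_d). -/
theorem information_flow_invariant
    (m : ℕ) (hm : 1 ≤ m)
    (ρ F₁ g₁₁ : ℝ × ℝ × (Fin m → ℝ) → ℝ)
    (hρ_meas : Measurable ρ)
    (hρ_nonneg : ∀ x, 0 ≤ ρ x)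
    (hρ_int : Integrable ρ)
    (hρ_prob : ∫ x : ℝ × ℝ × (Fin m → ℝ), ρ x = 1)
    (hρ1_pos : ∀ᵐ x₁ : ℝ, 0 < rho1 ρ x₁)
    -- φ is a C¹ diffeomorphism of ℝ^{d-2}
    (φ : (Fin m → ℝ) ≃ (Fin m → ℝ))
    (hφ : ContDiff ℝ 1 ⇑φ)
    (hφinv : ContDiff ℝ 1 ⇑φ.symm)
    -- the transformed density, drift and diffusion coefficient
    (ρt Ft gt : ℝ × ℝ × (Fin m → ℝ) → ℝ)
    (hρt : ∀ x : ℝ × ℝ × (Fin m → ℝ),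
      ρt x = ρ (x.1, x.2.1, φ.symm x.2.2)
              * |ContinuousLinearMap.det (fderiv ℝ (⇑φ.symm) x.2.2)|)
    (hFt : ∀ x : ℝ × ℝ × (Fin m → ℝ), Ft x = F₁ (x.1, x.2.1, φ.symm x.2.2))
    (hgt : ∀ x : ℝ × ℝ × (Fin m → ℝ), gt x = g₁₁ (x.1, x.2.1, φ.symm x.2.2))
    -- ρ_{∖2} is C² in x₁
    (h_smooth : ∀ y : Fin m → ℝ, ContDiff ℝ 2 (fun t => rhoM2 ρ t y))
    -- differentiation in x₁ may be interchanged with the integration (over x₂)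
    -- defining ρ̃_{∖2} from ρ̃
    (h_swap1 : ∀ (x₁ : ℝ) (y : Fin m → ℝ),
      deriv (fun t => rhoM2 ρt t y) x₁ = ∫ x₂ : ℝ, deriv (fun t => ρt (t, x₂, y)) x₁)
    (h_swap2 : ∀ (x₁ : ℝ) (y : Fin m → ℝ),
      deriv (deriv (fun t => rhoM2 ρt t y)) x₁
        = ∫ x₂ : ℝ, deriv (deriv (fun t => ρt (t, x₂, y))) x₁)
    -- all integrals below exist and are finite (in particular the integrability
    -- needed to apply the change of variables y = φ⁻¹(ỹ))
    (hint1 : Integrable (fun x : ℝ × ℝ × (Fin m → ℝ) =>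
      rho2c ρ x.1 x.2.1 * deriv (fun t => F₁ (t, x.2.1, x.2.2) * rhoM2 ρ t x.2.2) x.1))
    (hint2 : Integrable (fun x : ℝ × ℝ × (Fin m → ℝ) =>
      rho2c ρ x.1 x.2.1
        * deriv (deriv (fun t => g₁₁ (t, x.2.1, x.2.2) * rhoM2 ρ t x.2.2)) x.1))
    (hint3 : Integrable (fun x : ℝ × ℝ × (Fin m → ℝ) =>
      rho2c ρt x.1 x.2.1 * deriv (fun t => Ft (t, x.2.1, x.2.2) * rhoM2 ρt t x.2.2) x.1))
    (hint4 : Integrable (fun x : ℝ × ℝ × (Fin m → ℝ) =>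
      rho2c ρt x.1 x.2.1
        * deriv (deriv (fun t => gt (t, x.2.1, x.2.2) * rhoM2 ρt t x.2.2)) x.1)) :
    infoFlow ρt Ft gt = infoFlow ρ F₁ g₁₁ :=
  information_flow_invariant_general m ρ F₁ g₁₁ φ hφinv ρt Ft gt hρt hFt hgt
end
end

section
/- (Theorem 5, closed-form estimator.) Let d ≥ 1 and N ≥ 1, let x₁,…,x_N ∈ ℝ^d be data points and y₁,…,y_N ∈ ℝ a derived series (the Euler forward-difference series of the first component). Let x̄ ∈ ℝ^d and ȳ ∈ ℝ be the sample means, let C ∈ ℝ^{d×d} with C_{ij} = (1/N)Σ_{n=1}^N (x_{n,i}−x̄_i)(x_{n,j}−x̄_j) be the sample covariance matrix, assumed invertible, let Δ_{ij} denote the (i,j) cofactor of C, and let C_{j,d1} = (1/N)Σ_{n=1}^N (x_{n,j}−x̄_j)(y_n−ȳ). Then any minimizer (f̂, â₁,…,â_d) ∈ ℝ × ℝ^d of the least-squares objective Σ_{n=1}^N (y_n − f − Σ_{j=1}^d a_j x_{n,j})² — equivalently, any maximum likelihood estimator under the linear model y_n = f + Σ_j a_j x_{n,j} + ε_n with i.i.d.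 centered Gaussian noise ε_n — is unique in (â₁,…,â_d) and satisfies â₂ = (1/det C)·Σ_{j=1}^d Δ_{2j} C_{j,d1}; consequently the information flow estimator T̂_{2→1} = â₂ · C₁₂/C₁₁ equals (1/det C)·(Σ_{j=1}^d Δ_{2j} C_{j,d1})·C₁₂/C₁₁. -/
open Finset Matrix

noncomputable section

/-- Sample mean of the data coordinates. -/
def xbar {d N : ℕ} (x : Fin N → Fin d → ℝ) (i : Fin d) : ℝ :=
  (1 / (N : ℝ)) * ∑ n, x n i

/-- Sample mean of the derived scalar series. -/
def ybar {N : ℕ} (y : Fin N → ℝ) : ℝ :=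
  (1 / (N : ℝ)) * ∑ n, y n

/-- Sample covariance matrix: C_{ij} = (1/N)Σₙ (x_{n,i}−x̄_i)(x_{n,j}−x̄_j). -/
def covM {d N : ℕ} (x : Fin N → Fin d → ℝ) : Matrix (Fin d) (Fin d) ℝ :=
  Matrix.of fun i j => (1 / (N : ℝ)) * ∑ n, (x n i - xbar x i) * (x n j - xbar x j)

/-- Sample covariance of the j-th coordinate with the derived series:
C_{j,d1} = (1/N)Σₙ (x_{n,j}−x̄_j)(yₙ−ȳ). -/
def covY {d N : ℕ} (x : Fin N → Fin d → ℝ) (y : Fin N → ℝ) (j : Fin d) : ℝ :=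
  (1 / (N : ℝ)) * ∑ n, (x n j - xbar x j) * (y n - ybar y)

/-- The (i,j) cofactor Δ_{ij} of C, characterized by (C⁻¹)_{ji} = Δ_{ij}/det C,
i.e. Δ_{ij} = (adjugate C)_{ji}. -/
def cof {d : ℕ} (C : Matrix (Fin d) (Fin d) ℝ) (i j : Fin d) : ℝ :=
  C.adjugate j i

/-- The least-squares objective Σₙ (yₙ − f − Σⱼ aⱼ x_{n,j})², whose minimizer is the
maximum likelihood estimator under the linear model with i.i.d. centered Gaussian
additive noise. -/
def lsObj {d N : ℕ} (x : Fin N → Fin d → ℝ) (y : Fin N → ℝ) (f : ℝ) (a : Fin d → ℝ) : ℝ :=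
  ∑ n, (y n - f - ∑ j, a j * x n j) ^ 2

lemma quad_min (A B : ℝ) (hA : 0 ≤ A) (h : ∀ t : ℝ, 0 ≤ A * t^2 + B * t) : B = 0 := by
  by_contra hB
  have hA1 : (0:ℝ) < A + 1 := by linarith
  have h1 := h (-B / (A+1))
  rw [div_pow, neg_pow, neg_div] at h1
  have h2 : 0 ≤ (A * (B^2 / (A+1)^2) + B * (-(B/(A+1)))) * (A+1)^2 := by
    have := mul_nonneg h1 (sq_nonneg (A+1))
    calc (0:ℝ) ≤ (A * ((-1)^2 * B ^ 2 / (A + 1) ^ 2) + B * -(B / (A + 1))) * (A+1)^2 := this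
    _ = (A * (B^2 / (A+1)^2) + B * (-(B/(A+1)))) * (A+1)^2 := by ring
  have h3 : (A * (B^2 / (A+1)^2) + B * (-(B/(A+1)))) * (A+1)^2 = -B^2 := by
    field_simp; ring
  rw [h3] at h2
  have : B^2 = 0 := le_antisymm (by linarith) (sq_nonneg B)
  exact hB (pow_eq_zero_iff two_ne_zero |>.mp this)

lemma normal_eq {d N : ℕ} (hN : 1 ≤ N) (x : Fin N → Fin d → ℝ) (y : Fin N → ℝ)
    (f : ℝ) (a : Fin d → ℝ)
    (hmin : ∀ (f' : ℝ) (a' : Fin d → ℝ), lsObj x y f a ≤ lsObj x y f' a') :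
    (covM x).mulVec a = covY x y := by
  have hNpos : (0:ℝ) < N := by exact_mod_cast hN
  have hNne : (N:ℝ) ≠ 0 := ne_of_gt hNpos
  set r : Fin N → ℝ := fun n => y n - f - ∑ j, a j * x n j with hr
  -- residuals sum to zero
  have hsum0 : ∑ n, r n = 0 := by
    have key : ∀ t : ℝ, 0 ≤ (N:ℝ) * t^2 + (-(2 * ∑ n, r n)) * t := by
      intro t
      have h1 := hmin (f + t) a
      have h2 : lsObj x y (f + t) a = ∑ n, (r n - t)^2 := by
        unfold lsObj; apply Finset.sum_congr rfl; intro n _; rw [hr]; ring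
      have h3 : lsObj x y f a = ∑ n, (r n)^2 := rfl
      rw [h2, h3] at h1
      have h4 : ∑ n, (r n - t)^2 = ∑ n, (r n)^2 - 2 * (∑ n, r n) * t + (N:ℝ) * t^2 := by
        simp only [sub_sq]
        rw [Finset.sum_add_distrib, Finset.sum_sub_distrib, ← Finset.sum_mul, ← Finset.mul_sum]
        simp [Finset.sum_const, Finset.card_univ]
      rw [h4] at h1; linarith
    have := quad_min (N:ℝ) _ (le_of_lt hNpos) key
    linarith
  -- residuals orthogonal to each coordinate
  have horth : ∀ k : Fin d, ∑ n, r n * x n k = 0 := by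
    intro k
    have key : ∀ t : ℝ, 0 ≤ (∑ n, (x n k)^2) * t^2 + (-(2 * ∑ n, r n * x n k)) * t := by
      intro t
      have h1 := hmin f (fun j => a j + t * (if j = k then 1 else 0))
      have h2 : lsObj x y f (fun j => a j + t * (if j = k then 1 else 0))
          = ∑ n, (r n - t * x n k)^2 := by
        unfold lsObj; apply Finset.sum_congr rfl; intro n _
        have hsum : ∑ j, (a j + t * (if j = k then 1 else 0)) * x n j
            = (∑ j, a j * x n j) + t * x n k := by
          have step : ∀ j : Fin d, (a j + t * (if j = k then 1 else 0)) * x n j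
              = a j * x n j + (if j = k then t * x n j else 0) := by
            intro j; split <;> ring
          rw [Finset.sum_congr rfl (fun j _ => step j), Finset.sum_add_distrib,
            Finset.sum_ite_eq' Finset.univ k (fun j => t * x n j)]
          simp
        rw [hsum, hr]; ring
      have h3 : lsObj x y f a = ∑ n, (r n)^2 := rfl
      rw [h2, h3] at h1
      have h4 : ∑ n, (r n - t * x n k)^2
          = ∑ n, (r n)^2 - 2 * (∑ n, r n * x n k) * t + (∑ n, (x n k)^2) * t^2 := by
        have step : ∀ n : Fin N, (r n - t * x n k)^2
            = r n^2 - 2*t*(r n * x n k) + t^2 * (x n k)^2 := fun n => by ring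
        rw [Finset.sum_congr rfl (fun n _ => step n), Finset.sum_add_distrib,
          Finset.sum_sub_distrib, ← Finset.mul_sum, ← Finset.mul_sum]
        ring
      rw [h4] at h1; linarith
    have := quad_min _ _ (Finset.sum_nonneg fun n _ => sq_nonneg _) key
    linarith
  -- mean of y in terms of f and a
  have hybar : ybar y = f + ∑ j, a j * xbar x j := by
    unfold ybar xbar
    have h5 : ∑ n, y n = (N:ℝ) * f + ∑ j, a j * ∑ n, x n j := by
      have hyn : ∀ n, y n = r n + f + ∑ j, a j * x n j := fun n => by rw [hr]; ring
      rw [Finset.sum_congr rfl fun n _ => hyn n, Finset.sum_add_distrib,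
        Finset.sum_add_distrib, hsum0, Finset.sum_comm]
      simp only [Finset.sum_const, Finset.card_univ, Fintype.card_fin, nsmul_eq_mul, zero_add]
      congr 1
      exact Finset.sum_congr rfl fun j _ => (Finset.mul_sum _ _ _).symm
    rw [h5, mul_add, Finset.mul_sum]
    have : (1:ℝ)/N * ((N:ℝ) * f) = f := by field_simp
    rw [this]
    congr 1
    exact Finset.sum_congr rfl fun j _ => by ring
  have hy : ∀ n, y n - ybar y = r n + ∑ j, a j * (x n j - xbar x j) := by
    intro n
    rw [hybar, hr]
    simp only [mul_sub]
    rw [Finset.sum_sub_distrib]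
    ring
  have key : ∀ n, ∑ j, a j * (x n j - xbar x j) = (y n - ybar y) - r n :=
    fun n => by rw [hy n]; ring
  funext k
  have e1 : ∑ n, (x n k - xbar x k) * r n = 0 := by
    have : ∑ n, (x n k - xbar x k) * r n = (∑ n, r n * x n k) - xbar x k * ∑ n, r n := by
      rw [Finset.mul_sum, ← Finset.sum_sub_distrib]
      exact Finset.sum_congr rfl fun n _ => by ring
    rw [this, horth k, hsum0]; ring
  have lhs : (covM x).mulVec a k
      = (1/(N:ℝ)) * ∑ n, (x n k - xbar x k) * ((y n - ybar y) - r n) := by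
    show ∑ j, covM x k j * a j = _
    unfold covM
    simp only [Matrix.of_apply]
    calc ∑ j, ((1/(N:ℝ)) * ∑ n, (x n k - xbar x k)*(x n j - xbar x j)) * a j
        = (1/(N:ℝ)) * ∑ j, ∑ n, (x n k - xbar x k) * (a j * (x n j - xbar x j)) := by
          rw [Finset.mul_sum]
          refine Finset.sum_congr rfl fun j _ => ?_
          have : ∑ n, (x n k - xbar x k) * (a j * (x n j - xbar x j))
              = a j * ∑ n, (x n k - xbar x k) * (x n j - xbar x j) := by
            rw [Finset.mul_sum]
            exact Finset.sum_congr rfl fun n _ => by ring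
          rw [this]; ring
      _ = (1/(N:ℝ)) * ∑ n, (x n k - xbar x k) * ∑ j, a j * (x n j - xbar x j) := by
          rw [Finset.sum_comm]
          congr 1
          exact Finset.sum_congr rfl fun n _ => (Finset.mul_sum _ _ _).symm
      _ = _ := by
          congr 1
          exact Finset.sum_congr rfl fun n _ => by rw [key n]
  rw [lhs]
  have split : ∑ n, (x n k - xbar x k) * ((y n - ybar y) - r n)
      = (∑ n, (x n k - xbar x k) * (y n - ybar y)) - ∑ n, (x n k - xbar x k) * r n := by
    rw [← Finset.sum_sub_distrib]
    exact Finset.sum_congr rfl fun n _ => by ring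
  rw [split, e1, sub_zero]
  rfl

lemma covM_symm {d N : ℕ} (x : Fin N → Fin d → ℝ) : (covM x)ᵀ = covM x := by
  ext i j
  unfold covM
  simp only [Matrix.transpose_apply, Matrix.of_apply]
  congr 1
  exact Finset.sum_congr rfl fun n _ => by ring

/-- Theorem 5: the least-squares / maximum likelihood coefficient ahat₂
is unique and equals (1/det C)·Σⱼ Δ_{2j} C_{j,d1}; consequently the information flow
estimator T̂_{2→1} = ahat₂·C₁₂/C₁₁ equals (1/det C)·(Σⱼ Δ_{2j} C_{j,d1})·C₁₂/C₁₁. -/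
theorem mle_estimator_of_information_flow
    (d N : ℕ) (hd : 1 ≤ d) (hN : 1 ≤ N)
    (x : Fin N → Fin d → ℝ) (y : Fin N → ℝ)
    (hC : (covM x).det ≠ 0)
    (fhat : ℝ) (ahat : Fin d → ℝ)
    (hmin : ∀ (f : ℝ) (a : Fin d → ℝ), lsObj x y fhat ahat ≤ lsObj x y f a) :
    (∀ (f' : ℝ) (a' : Fin d → ℝ),
        (∀ (f : ℝ) (a : Fin d → ℝ), lsObj x y f' a' ≤ lsObj x y f a) → a' = ahat)
    ∧ ahat ⟨1 % d, Nat.mod_lt _ (by omega)⟩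
        = (1 / (covM x).det) * ∑ j, cof (covM x) ⟨1 % d, Nat.mod_lt _ (by omega)⟩ j * covY x y j
    ∧ ahat ⟨1 % d, Nat.mod_lt _ (by omega)⟩ * covM x ⟨0, by omega⟩ ⟨1 % d, Nat.mod_lt _ (by omega)⟩
          / covM x ⟨0, by omega⟩ ⟨0, by omega⟩
        = ((1 / (covM x).det) * ∑ j, cof (covM x) ⟨1 % d, Nat.mod_lt _ (by omega)⟩ j * covY x y j)
            * covM x ⟨0, by omega⟩ ⟨1 % d, Nat.mod_lt _ (by omega)⟩
            / covM x ⟨0, by omega⟩ ⟨0, by omega⟩ := by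
  have hU : IsUnit (covM x).det := isUnit_iff_ne_zero.mpr hC
  have hsolve : ∀ (f : ℝ) (a : Fin d → ℝ),
      (∀ (f' : ℝ) (a' : Fin d → ℝ), lsObj x y f a ≤ lsObj x y f' a') →
      a = (covM x)⁻¹.mulVec (covY x y) := by
    intro f a hm
    have h := normal_eq hN x y f a hm
    rw [← h, Matrix.mulVec_mulVec, Matrix.nonsing_inv_mul _ hU, Matrix.one_mulVec]
  have hahat := hsolve fhat ahat hmin
  set i1 : Fin d := ⟨1 % d, Nat.mod_lt _ (by omega)⟩ with hi1
  have hadjsym : ∀ j : Fin d, (covM x).adjugate i1 j = (covM x).adjugate j i1 := by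
    intro j
    have h := Matrix.adjugate_transpose (covM x)
    rw [covM_symm] at h
    conv_lhs => rw [← h]
    rfl
  have hmid : ahat i1 = (1 / (covM x).det) * ∑ j, cof (covM x) i1 j * covY x y j := by
    rw [hahat]
    show ∑ j, (covM x)⁻¹ i1 j * covY x y j = _
    rw [Matrix.inv_def]
    simp only [Matrix.smul_apply, smul_eq_mul, Ring.inverse_eq_inv']
    rw [Finset.mul_sum]
    refine Finset.sum_congr rfl fun j _ => ?_
    unfold cof
    rw [hadjsym j]
    field_simp
  refine ⟨fun f' a' hm' => (hsolve f' a' hm').trans hahat.symm, hmid, ?_⟩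
  rw [hmid]
end
end
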